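/- For every real s > −2 and every z ∈ [0,1): S_s(z) = ∫_0^1 t^{s+1} (1−t²)^{s/2} (1−z t²)^{−s/2} dt = ( Γ(s/2+1)² / (2 Γ(s+2)) ) · ₂F₁( s/2, s/2+1; s+2; z ). -/

import Mathlib

open MeasureTheory Real

/-- The special function `S_s(z) = ∫₀¹ t^{s+1} (1-t²)^{s/2} (1-zt²)^{-s/2} dt`. -/
noncomputable def Sfun (s z : ℝ) : ℝ :=
  ∫ t in Set.Ioo (0 : ℝ) 1,
    t ^ (s + 1) * (1 - t ^ 2) ^ (s / 2) * (1 - z * t ^ 2) ^ (-(s / 2))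

/-- The Gauss hypergeometric series `₂F₁(a,b;c;z) = ∑ (a)_n (b)_n / ((c)_n n!) zⁿ`,
where `(a)_n` is the Pochhammer (rising factorial) symbol. -/
noncomputable def twoF1 (a b c z : ℝ) : ℝ :=
  ∑' n : ℕ,
    ((ascPochhammer ℝ n).eval a * (ascPochhammer ℝ n).eval b
      / ((ascPochhammer ℝ n).eval c * (n.factorial : ℝ))) * z ^ n

/-!
Expand `(1 - z t²)^(-s/2) = ∑ (s/2)ₙ/n! (z t²)ⁿ` by the binomial series and integrate term by
term; this is legitimate because `t²ⁿ ≤ 1` and the binomial series converges absolutely for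
`|z| < 1`. The substitution `u = t²` makes the `n`-th moment `∫₀¹ t^(s+1) (1-t²)^(s/2) t²ⁿ dt`
half the Beta integral `B(s/2+1+n, s/2+1)`, and `Γ(x+n) = (x)ₙ Γ(x)` turns its Gamma quotient into
`Γ(s/2+1)² / (2Γ(s+2))` times the ratio `(s/2+1)ₙ / (s+2)ₙ` of hypergeometric coefficients.
-/

open Set
open scoped Nat

theorem Ring.choose_add_natCast_sub_one {K : Type*} [Field K] [CharZero K] (a : K) (n : ℕ) :
    Ring.choose (a + n - 1) n = (ascPochhammer K n).eval a / n ! := by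
  rw [Ring.choose_eq_smul, Polynomial.descPochhammer_smeval_eq_ascPochhammer,
    Polynomial.ascPochhammer_smeval_cast, Polynomial.ascPochhammer_smeval_eq_eval,
    smul_eq_mul, div_eq_inv_mul]
  congr 2
  ring

theorem Real.mem_eball_zero_one_iff {x : ℝ} : x ∈ Metric.eball (0 : ℝ) 1 ↔ |x| < 1 := by
  rw [← ENNReal.coe_one, Metric.eball_coe, NNReal.coe_one, mem_ball_zero_iff, norm_eq_abs]

theorem Real.hasFPowerSeriesOnBall_one_sub_rpow_neg (a : ℝ) :
    HasFPowerSeriesOnBall (fun x ↦ (1 - x) ^ (-a))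
      (.ofScalars ℝ fun n ↦ (ascPochhammer ℝ n).eval a / n !) 0 1 := by
  have h := Real.one_div_one_sub_rpow_hasFPowerSeriesOnBall_zero a
  simp only [Ring.choose_add_natCast_sub_one] at h
  refine h.congr fun x hx ↦ ?_
  have : |x| < 1 := Real.mem_eball_zero_one_iff.1 hx
  simp only [rpow_neg (by linarith [le_abs_self x] : 0 ≤ 1 - x), one_div]

theorem Real.hasSum_ascPochhammer_div_factorial_mul_pow (a : ℝ) {x : ℝ} (hx : |x| < 1) :
    HasSum (fun n ↦ (ascPochhammer ℝ n).eval a / n ! * x ^ n) ((1 - x) ^ (-a)) := by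
  simpa [FormalMultilinearSeries.ofScalars_apply_eq, mul_comm] using
    (Real.hasFPowerSeriesOnBall_one_sub_rpow_neg a).hasSum (Real.mem_eball_zero_one_iff.2 hx)

theorem Real.summable_abs_ascPochhammer_div_factorial_mul_pow (a : ℝ) {x : ℝ} (hx : |x| < 1) :
    Summable (fun n ↦ |(ascPochhammer ℝ n).eval a / n ! * x ^ n|) := by
  have h := Real.hasFPowerSeriesOnBall_one_sub_rpow_neg a
  have hx' : x ∈ Metric.eball (0 : ℝ) _ :=
    Metric.eball_subset_eball h.r_le (Real.mem_eball_zero_one_iff.2 hx)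
  simpa [FormalMultilinearSeries.ofScalars_apply_eq, mul_comm, abs_div] using
    FormalMultilinearSeries.summable_norm_apply _ hx'

theorem Real.Gamma_add_nat_eq_ascPochhammer_mul {x : ℝ} (hx : ∀ k : ℕ, x + k ≠ 0) (n : ℕ) :
    Gamma (x + n) = (ascPochhammer ℝ n).eval x * Gamma x := by
  induction n with
  | zero => simp
  | succ n ih =>
    rw [Nat.cast_succ, ← add_assoc, Gamma_add_one (hx n), ih, ascPochhammer_succ_eval]
    ring

theorem Complex.ofReal_rpow_mul_one_sub_rpow {x : ℝ} (hx : x ∈ Ioo 0 1) (p q : ℝ) :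
    ((x ^ (p - 1) * (1 - x) ^ (q - 1) : ℝ) : ℂ)
      = (x : ℂ) ^ ((p : ℂ) - 1) * (1 - (x : ℂ)) ^ ((q : ℂ) - 1) := by
  rw [Complex.ofReal_mul, Complex.ofReal_cpow hx.1.le, Complex.ofReal_cpow (sub_nonneg.2 hx.2.le)]
  push_cast
  ring_nf

theorem Real.integrableOn_rpow_mul_one_sub_rpow {p q : ℝ} (hp : 0 < p) (hq : 0 < q) :
    IntegrableOn (fun u : ℝ ↦ u ^ (p - 1) * (1 - u) ^ (q - 1)) (Ioo 0 1) := by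
  have h := Complex.betaIntegral_convergent (u := p) (v := q) (by simpa) (by simpa)
  refine IntegrableOn.congr_fun (((intervalIntegrable_iff_integrableOn_Ioc_of_le
    zero_le_one).1 h).mono_set Ioo_subset_Ioc_self).re (fun x hx ↦ ?_) measurableSet_Ioo
  rw [← Complex.ofReal_rpow_mul_one_sub_rpow hx]
  rfl

theorem Real.integral_rpow_mul_one_sub_rpow {p q : ℝ} (hp : 0 < p) (hq : 0 < q) :
    ∫ u in Ioo (0 : ℝ) 1, u ^ (p - 1) * (1 - u) ^ (q - 1) = Gamma p * Gamma q / Gamma (p + q) := by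
  have h : Complex.betaIntegral p q
      = ((∫ u in Ioo 0 1, u ^ (p - 1) * (1 - u) ^ (q - 1) : ℝ) : ℂ) := by
    rw [Complex.betaIntegral, intervalIntegral.integral_of_le zero_le_one,
      integral_Ioc_eq_integral_Ioo, ← integral_complex_ofReal]
    exact setIntegral_congr_fun measurableSet_Ioo fun x hx ↦
      (Complex.ofReal_rpow_mul_one_sub_rpow hx p q).symm
  rw [← ProbabilityTheory.beta, ProbabilityTheory.beta_eq_betaIntegralReal p q hp hq, h,
    Complex.ofReal_re]

theorem strictMonoOn_sq_Icc_zero_one : StrictMonoOn (fun t : ℝ ↦ t ^ 2) (Icc 0 1) :=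
  (pow_left_strictMonoOn₀ two_ne_zero).mono fun _ ht ↦ ht.1

theorem image_sq_Ioo_zero_one : (fun t : ℝ ↦ t ^ 2) '' Ioo 0 1 = Ioo 0 1 := by
  simpa using (continuous_pow 2).continuousOn.image_Ioo_of_strictMonoOn zero_le_one
    strictMonoOn_sq_Icc_zero_one

theorem hasDerivWithinAt_sq_Ioo_zero_one :
    ∀ t ∈ Ioo (0 : ℝ) 1, HasDerivWithinAt (fun t ↦ t ^ 2) (2 * t) (Ioo 0 1) t := fun t _ ↦ by
  simpa using (hasDerivAt_pow 2 t).hasDerivWithinAt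

theorem injOn_sq_Ioo_zero_one : InjOn (fun t : ℝ ↦ t ^ 2) (Ioo 0 1) :=
  strictMonoOn_sq_Icc_zero_one.injOn.mono Ioo_subset_Icc_self

theorem integral_Ioo_zero_one_comp_sq (g : ℝ → ℝ) :
    ∫ t in Ioo (0 : ℝ) 1, 2 * t * g (t ^ 2) = ∫ u in Ioo (0 : ℝ) 1, g u := by
  have h := integral_image_eq_integral_abs_deriv_smul measurableSet_Ioo
    hasDerivWithinAt_sq_Ioo_zero_one injOn_sq_Ioo_zero_one g
  rw [image_sq_Ioo_zero_one] at h
  rw [h]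
  refine setIntegral_congr_fun measurableSet_Ioo fun t ht ↦ ?_
  rw [smul_eq_mul, abs_of_pos (by linarith [ht.1])]

theorem integrableOn_Ioo_zero_one_comp_sq_iff {g : ℝ → ℝ} :
    IntegrableOn (fun t ↦ 2 * t * g (t ^ 2)) (Ioo (0 : ℝ) 1) ↔ IntegrableOn g (Ioo 0 1) := by
  have h := integrableOn_image_iff_integrableOn_abs_deriv_smul measurableSet_Ioo
    hasDerivWithinAt_sq_Ioo_zero_one injOn_sq_Ioo_zero_one (g := g)
  rw [image_sq_Ioo_zero_one] at h
  rw [h]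
  refine integrableOn_congr_fun (fun t ht ↦ ?_) measurableSet_Ioo
  rw [smul_eq_mul, abs_of_pos (by linarith [ht.1])]

theorem Real.rpow_two_mul_sub_one {t : ℝ} (ht : 0 < t) (p : ℝ) :
    t ^ (2 * p - 1) = t * (t ^ 2) ^ (p - 1) := by
  rw [show 2 * p - 1 = 1 + (2 : ℕ) * (p - 1) by push_cast; ring, rpow_add ht, rpow_one,
    rpow_mul ht.le, rpow_natCast]

theorem Real.integrableOn_rpow_mul_one_sub_sq_rpow {p q : ℝ} (hp : 0 < p) (hq : 0 < q) :
    IntegrableOn (fun t : ℝ ↦ t ^ (2 * p - 1) * (1 - t ^ 2) ^ (q - 1)) (Ioo 0 1) := by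
  have h := (integrableOn_Ioo_zero_one_comp_sq_iff.2
    (integrableOn_rpow_mul_one_sub_rpow hp hq)).const_mul 2⁻¹
  refine IntegrableOn.congr_fun h (fun t ht ↦ ?_) measurableSet_Ioo
  rw [rpow_two_mul_sub_one ht.1]
  ring

theorem Real.integral_rpow_mul_one_sub_sq_rpow {p q : ℝ} (hp : 0 < p) (hq : 0 < q) :
    ∫ t in Ioo (0 : ℝ) 1, t ^ (2 * p - 1) * (1 - t ^ 2) ^ (q - 1)
      = Gamma p * Gamma q / (2 * Gamma (p + q)) := by
  calc ∫ t in Ioo (0 : ℝ) 1, t ^ (2 * p - 1) * (1 - t ^ 2) ^ (q - 1)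
      = 2⁻¹ * ∫ t in Ioo (0 : ℝ) 1, 2 * t * ((t ^ 2) ^ (p - 1) * (1 - t ^ 2) ^ (q - 1)) := by
        rw [← integral_const_mul]
        refine setIntegral_congr_fun measurableSet_Ioo fun t ht ↦ ?_
        rw [rpow_two_mul_sub_one ht.1]
        ring
    _ = Gamma p * Gamma q / (2 * Gamma (p + q)) := by
        rw [integral_Ioo_zero_one_comp_sq (fun u ↦ u ^ (p - 1) * (1 - u) ^ (q - 1)),
          integral_rpow_mul_one_sub_rpow hp hq]
        ring

theorem MeasureTheory.integral_tsum_mul_pow {α : Type*} [MeasurableSpace α] {μ : Measure α}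
    {w g : α → ℝ} {a : ℕ → ℝ} (hw : Integrable w μ) (hg : AEStronglyMeasurable g μ)
    (hg_le : ∀ᵐ x ∂μ, |g x| ≤ 1) (ha : Summable fun n ↦ |a n|) :
    ∫ x, ∑' n, a n * (w x * g x ^ n) ∂μ = ∑' n, a n * ∫ x, w x * g x ^ n ∂μ := by
  have hpow_le : ∀ n, ∀ᵐ x ∂μ, ‖g x ^ n‖ ≤ 1 := fun n ↦ hg_le.mono fun x hx ↦ by
    simpa [norm_pow] using pow_le_one₀ (abs_nonneg _) hx
  have hint : ∀ n, Integrable (fun x ↦ a n * (w x * g x ^ n)) μ := fun n ↦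
    ((hw.mul_bdd (hg.pow n) (hpow_le n)).const_mul (a n))
  have hnorm_le : ∀ n, ∫ x, ‖a n * (w x * g x ^ n)‖ ∂μ ≤ |a n| * ∫ x, ‖w x‖ ∂μ := fun n ↦ by
    rw [← integral_const_mul]
    refine integral_mono_ae (hint n).norm (hw.norm.const_mul _) ?_
    filter_upwards [hpow_le n] with x hx
    rw [norm_mul, norm_mul, Real.norm_eq_abs (a n)]
    gcongr
    exact mul_le_of_le_one_right (norm_nonneg _) hx
  have hsum : Summable fun n ↦ ∫ x, ‖a n * (w x * g x ^ n)‖ ∂μ :=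
    .of_nonneg_of_le (fun n ↦ integral_nonneg fun _ ↦ norm_nonneg _) hnorm_le (ha.mul_right _)
  rw [← integral_tsum_of_summable_integral_norm hint hsum]
  exact tsum_congr fun n ↦ integral_const_mul _ _

theorem Real.integral_rpow_mul_one_sub_sq_rpow_mul_sq_pow {s : ℝ} (hs : -2 < s) (n : ℕ) :
    ∫ t in Ioo (0 : ℝ) 1, t ^ (s + 1) * (1 - t ^ 2) ^ (s / 2) * (t ^ 2) ^ n
      = Gamma (s / 2 + 1) ^ 2 / (2 * Gamma (s + 2))
        * ((ascPochhammer ℝ n).eval (s / 2 + 1) / (ascPochhammer ℝ n).eval (s + 2)) := by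
  have hs1 : 0 < s / 2 + 1 := by linarith
  have hs2 : 0 < s + 2 := by linarith
  have hbeta := integral_rpow_mul_one_sub_sq_rpow (p := s / 2 + 1 + n) (q := s / 2 + 1)
    (by positivity) hs1
  rw [show s / 2 + 1 + n + (s / 2 + 1) = s + 2 + n by ring,
    Gamma_add_nat_eq_ascPochhammer_mul (fun k ↦ by positivity) n,
    Gamma_add_nat_eq_ascPochhammer_mul (fun k ↦ by positivity) n] at hbeta
  calc _ = ∫ t in Ioo (0 : ℝ) 1,
            t ^ (2 * (s / 2 + 1 + n) - 1) * (1 - t ^ 2) ^ (s / 2 + 1 - 1) := by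
        refine setIntegral_congr_fun measurableSet_Ioo fun t ht ↦ ?_
        rw [show 2 * (s / 2 + 1 + n) - 1 = s + 1 + (2 * n : ℕ) by push_cast; ring,
          rpow_add ht.1 (s + 1), rpow_natCast, pow_mul, show s / 2 + 1 - 1 = s / 2 by ring]
        ring
    _ = _ := by rw [hbeta]; ring

/-- **Hypergeometric representation of `S_s`.** For `s > -2` and `z ∈ [0,1)`,
`S_s(z) = (Γ(s/2+1)² / (2Γ(s+2))) ₂F₁(s/2, s/2+1; s+2; z)`. -/
theorem Sfun_eq_twoF1
    (s : ℝ) (hs : -2 < s) (z : ℝ) (hz : z ∈ Set.Ico (0 : ℝ) 1) :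
    Sfun s z
      = Real.Gamma (s / 2 + 1) ^ 2 / (2 * Real.Gamma (s + 2))
          * twoF1 (s / 2) (s / 2 + 1) (s + 2) z := by
  obtain ⟨hz0, hz1⟩ := hz
  have hsq_lt : ∀ t ∈ Ioo (0 : ℝ) 1, t ^ 2 < 1 := fun t ht ↦ pow_lt_one₀ ht.1.le ht.2 two_ne_zero
  set c : ℕ → ℝ := fun n ↦ (ascPochhammer ℝ n).eval (s / 2) / n ! * z ^ n
  have hexpand : Sfun s z
      = ∫ t in Ioo (0 : ℝ) 1, ∑' n, c n * (t ^ (s + 1) * (1 - t ^ 2) ^ (s / 2) * (t ^ 2) ^ n) := by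
    refine setIntegral_congr_fun measurableSet_Ioo fun t ht ↦ ?_
    have hzt : |z * t ^ 2| < 1 := by
      rw [abs_of_nonneg (by positivity)]
      exact mul_lt_one_of_nonneg_of_lt_one_left hz0 hz1 (hsq_lt t ht).le
    rw [← (hasSum_ascPochhammer_div_factorial_mul_pow (s / 2) hzt).tsum_eq, ← tsum_mul_left]
    exact tsum_congr fun n ↦ by rw [mul_pow]; ring
  have hweight := integrableOn_rpow_mul_one_sub_sq_rpow (p := s / 2 + 1) (q := s / 2 + 1)
    (by linarith) (by linarith)
  rw [show 2 * (s / 2 + 1) - 1 = s + 1 by ring, show s / 2 + 1 - 1 = s / 2 by ring] at hweight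
  rw [hexpand, integral_tsum_mul_pow hweight (by fun_prop) ?_
      (summable_abs_ascPochhammer_div_factorial_mul_pow (s / 2) (abs_lt.2 ⟨by linarith, hz1⟩)),
    twoF1, ← tsum_mul_left]
  · refine tsum_congr fun n ↦ ?_
    rw [integral_rpow_mul_one_sub_sq_rpow_mul_sq_pow hs n]
    have := ascPochhammer_pos n (s + 2) (by linarith)
    field_simp
  · exact ae_restrict_of_forall_mem measurableSet_Ioo fun t ht ↦ by
      rw [abs_of_nonneg (by positivity)]
      exact (hsq_lt t ht).le
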